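/- arXiv:math/0601699 — 3 statements merged into one kernel-verified Lean document; each statement's English description precedes it below -/
import Mathlib

section
/- Let Γ be a nonempty bounded subset of the d×d real matrices, fix a ∈ ℝᵈ, and define G_a(β) = (1/2)·sup_{γ∈Γ} β·tr(γγᵀ a aᵀ) for β ∈ ℝ. Suppose ū : [0,∞) × ℝ → ℝ is C^{1,2} and satisfies ∂ū/∂t(t, y) = G_a(∂²ū/∂y²(t, y)) for all (t, y). Then the function u(t, x) := ū(t, ⟨a, x⟩) on [0,∞) × ℝᵈ is C^{1,2} and satisfies ∂u/∂t(t, x) = G(D²u(t, x)) for all (t, x), where D²u is the Hessian of u in x and G(A) = (1/2)·sup_{γ∈Γ} tr(γγᵀA). -/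
/-- Second mixed partial derivative of `f : ℝᵈ → ℝ` at `x` in the coordinate
directions `i` and `j`. -/
noncomputable def secondPartial {d : ℕ} (f : (Fin d → ℝ) → ℝ) (x : Fin d → ℝ)
    (i j : Fin d) : ℝ :=
  deriv (fun s : ℝ =>
    deriv (fun r : ℝ => f (x + s • (Pi.single i 1 : Fin d → ℝ) + r • (Pi.single j 1 : Fin d → ℝ))) 0) 0

/-- The Hessian matrix in the space variable. -/
noncomputable def hessianMatrix {d : ℕ} (f : (Fin d → ℝ) → ℝ) (x : Fin d → ℝ) :
    Matrix (Fin d) (Fin d) ℝ :=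
  Matrix.of fun i j => secondPartial f x i j

/-- `u : ℝ × ℝᵈ → ℝ` is of class `C^{1,2}`: differentiable in time, `C²` in space,
with jointly continuous time derivative and second space derivatives. -/
def IsC12 {d : ℕ} (u : ℝ → (Fin d → ℝ) → ℝ) : Prop :=
  (∀ x, Differentiable ℝ fun t => u t x) ∧
  (∀ t, ContDiff ℝ 2 (u t)) ∧
  Continuous (fun p : ℝ × (Fin d → ℝ) => deriv (fun s => u s p.2) p.1) ∧
  ∀ i j, Continuous fun p : ℝ × (Fin d → ℝ) => secondPartial (u p.1) p.2 i j

/-- `v : ℝ × ℝ → ℝ` is of class `C^{1,2}` (one space dimension). -/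
def IsC12One (v : ℝ → ℝ → ℝ) : Prop :=
  (∀ y, Differentiable ℝ fun t => v t y) ∧
  (∀ t, ContDiff ℝ 2 (v t)) ∧
  Continuous (fun p : ℝ × ℝ => deriv (fun s => v s p.2) p.1) ∧
  Continuous (fun p : ℝ × ℝ => deriv (deriv (v p.1)) p.2)

lemma aux_line_deriv (f : ℝ → ℝ) (hf : Differentiable ℝ f) (c m : ℝ) :
    deriv (fun r : ℝ => f (c + r * m)) 0 = m * deriv f c := by
  have h : HasDerivAt (fun r : ℝ => c + r * m) m 0 := (hasDerivAt_mul_const m).const_add c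
  have h2 : HasDerivAt f (deriv f c) (c + 0 * m) := by simpa using (hf _).hasDerivAt
  have h3 := h2.comp 0 h
  simpa [Function.comp_def, mul_comm] using h3.deriv

lemma aux_sum_shift {d : ℕ} (a x : Fin d → ℝ) (s r : ℝ) (i j : Fin d) :
    ∑ k, a k * (x + s • (Pi.single i 1 : Fin d → ℝ) + r • (Pi.single j 1 : Fin d → ℝ)) k
      = ((∑ k, a k * x k) + s * a i) + r * a j := by
  simp [Pi.single_apply, mul_add, Finset.sum_add_distrib, mul_ite, mul_comm]

lemma aux_secondPartial {d : ℕ} (a : Fin d → ℝ) (g : ℝ → ℝ) (hg : ContDiff ℝ 2 g)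
    (x : Fin d → ℝ) (i j : Fin d) :
    secondPartial (fun z => g (∑ k, a k * z k)) x i j
      = a i * a j * deriv (deriv g) (∑ k, a k * x k) := by
  set y := ∑ k, a k * x k with hy
  have hgd : Differentiable ℝ g := hg.differentiable (by norm_num)
  have hg2 : ContDiff ℝ (1 + 1) g := by norm_num [hg]
  have hgd' : Differentiable ℝ (deriv g) :=
    ((contDiff_succ_iff_deriv.mp hg2).2.2).differentiable one_ne_zero
  unfold secondPartial
  have e1 : (fun s : ℝ => deriv (fun r : ℝ =>
      (fun z => g (∑ k, a k * z k)) (x + s • (Pi.single i 1 : Fin d → ℝ) + r • (Pi.single j 1 : Fin d → ℝ))) 0)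
      = fun s => a j * deriv g (y + s * a i) := by
    funext s
    have : (fun r : ℝ => (fun z => g (∑ k, a k * z k))
        (x + s • (Pi.single i 1 : Fin d → ℝ) + r • (Pi.single j 1 : Fin d → ℝ)))
        = fun r => g ((y + s * a i) + r * a j) := by
      funext r; simp only [aux_sum_shift, ← hy]
    rw [this, aux_line_deriv g hgd]
  rw [e1]
  have : deriv (fun s : ℝ => a j * deriv g (y + s * a i)) 0
      = a j * deriv (fun s : ℝ => deriv g (y + s * a i)) 0 := deriv_const_mul_field _
  rw [this, aux_line_deriv (deriv g) hgd' y (a i)]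
  ring

lemma aux_sum_contDiff {d : ℕ} (a : Fin d → ℝ) :
    ContDiff ℝ 2 (fun x : Fin d → ℝ => ∑ i, a i * x i) :=
  ContDiff.sum fun i _ => contDiff_const.mul (contDiff_apply ℝ ℝ i)

lemma aux_sum_continuous {d : ℕ} (a : Fin d → ℝ) :
    Continuous (fun x : Fin d → ℝ => ∑ i, a i * x i) :=
  (aux_sum_contDiff a).continuous

/-- If `ū` is a `C^{1,2}` solution of the one-dimensional equation
`∂ū/∂t = G_a(∂²ū/∂y²)` with `G_a(β) = (1/2)·sup_{γ∈Γ} β·tr(γγᵀ a aᵀ)`, then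
`u(t,x) := ū(t, ⟨a,x⟩)` is `C^{1,2}` and solves the `d`-dimensional `G`-heat equation
`∂u/∂t = G(D²u)` with `G(A) = (1/2)·sup_{γ∈Γ} tr(γγᵀ A)`. -/
theorem G_heat_from_one_dimensional
    {d : ℕ} (Γ : Set (Matrix (Fin d) (Fin d) ℝ)) (hΓne : Γ.Nonempty)
    (hΓbd : ∃ M : ℝ, ∀ γ ∈ Γ, ∀ i j, |γ i j| ≤ M)
    (G : Matrix (Fin d) (Fin d) ℝ → ℝ)
    (hG : ∀ A, G A =
      (1 / 2) * sSup ((fun γ => Matrix.trace (γ * γ.transpose * A)) '' Γ))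
    (a : Fin d → ℝ) (Ga : ℝ → ℝ)
    (hGa : ∀ β : ℝ, Ga β =
      (1 / 2) * sSup ((fun γ =>
        β * Matrix.trace (γ * γ.transpose * Matrix.vecMulVec a a)) '' Γ))
    (ubar : ℝ → ℝ → ℝ) (hubar : IsC12One ubar)
    (hheat : ∀ t y : ℝ,
      deriv (fun s => ubar s y) t = Ga (deriv (deriv (ubar t)) y))
    (u : ℝ → (Fin d → ℝ) → ℝ)
    (hu : ∀ t x, u t x = ubar t (∑ i, a i * x i)) :
    IsC12 u ∧
    ∀ (t : ℝ) (x : Fin d → ℝ),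
      deriv (fun s => u s x) t = G (hessianMatrix (u t) x) := by
  obtain ⟨hT, hS, hTc, hSc⟩ := hubar
  -- u t as a function of x
  have hux : ∀ t, u t = fun x => ubar t (∑ i, a i * x i) := fun t => funext fun x => hu t x
  -- u as a function of t for fixed x
  have hut : ∀ x : Fin d → ℝ, (fun s => u s x) = fun s => ubar s (∑ i, a i * x i) :=
    fun x => funext fun s => hu s x
  have hsp : ∀ t x i j, secondPartial (u t) x i j
      = a i * a j * deriv (deriv (ubar t)) (∑ k, a k * x k) := by
    intro t x i j
    rw [hux t]
    exact aux_secondPartial a (ubar t) (hS t) x i j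
  refine ⟨⟨?_, ?_, ?_, ?_⟩, ?_⟩
  · intro x; rw [hut x]; exact hT _
  · intro t; rw [hux t]; exact (hS t).comp (aux_sum_contDiff a)
  · have : (fun p : ℝ × (Fin d → ℝ) => deriv (fun s => u s p.2) p.1)
        = fun p => deriv (fun s => ubar s (∑ i, a i * p.2 i)) p.1 := by
      funext p; rw [hut p.2]
    rw [this]
    exact hTc.comp (continuous_fst.prodMk ((aux_sum_continuous a).comp continuous_snd))
  · intro i j
    have : (fun p : ℝ × (Fin d → ℝ) => secondPartial (u p.1) p.2 i j)
        = fun p => a i * a j * deriv (deriv (ubar p.1)) (∑ k, a k * p.2 k) := by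
      funext p; exact hsp p.1 p.2 i j
    rw [this]
    exact continuous_const.mul
      (hSc.comp (continuous_fst.prodMk ((aux_sum_continuous a).comp continuous_snd)))
  · intro t x
    set y := ∑ k, a k * x k with hy
    set β := deriv (deriv (ubar t)) y with hβ
    have hA : hessianMatrix (u t) x = β • Matrix.vecMulVec a a := by
      ext i j
      simp only [hessianMatrix, Matrix.of_apply, Matrix.smul_apply, Matrix.vecMulVec_apply, smul_eq_mul]
      rw [hsp t x i j]; ring
    rw [hut x, hheat t y, hGa, hA, hG]
    congr 1
    refine congrArg sSup (Set.image_congr fun γ _ => ?_)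
    rw [Matrix.mul_smul, Matrix.trace_smul, smul_eq_mul, ← hβ]
end

section
/- (Hölder inequality for sublinear expectations.) Let E be a sublinear expectation on real-valued functions on a set Ω, and let p, q > 1 with 1/p + 1/q = 1. Then for all X, Y: E[|XY|] ≤ (E[|X|^p])^{1/p} · (E[|Y|^q])^{1/q}. -/
/-- Hölder's inequality for sublinear expectations: for conjugate
exponents `p, q > 1`, `E[|XY|] ≤ (E[|X|^p])^{1/p} · (E[|Y|^q])^{1/q}`. -/
theorem sublinear_expectation_holder
    {Ω : Type*} (E : (Ω → ℝ) → ℝ)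
    (hmono : ∀ X Y : Ω → ℝ, (∀ ω, X ω ≤ Y ω) → E X ≤ E Y)
    (hsub : ∀ X Y : Ω → ℝ, E (fun ω => X ω + Y ω) ≤ E X + E Y)
    (hpos : ∀ l : ℝ, 0 ≤ l → ∀ X : Ω → ℝ, E (fun ω => l * X ω) = l * E X)
    (p q : ℝ) (hp : 1 < p) (hq : 1 < q) (hpq : 1 / p + 1 / q = 1)
    (X Y : Ω → ℝ) :
    E (fun ω => |X ω * Y ω|) ≤
      (E (fun ω => |X ω| ^ p)) ^ (1 / p) * (E (fun ω => |Y ω| ^ q)) ^ (1 / q) := by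
  have hp0 : (0:ℝ) < p := lt_trans one_pos hp
  have hq0 : (0:ℝ) < q := lt_trans one_pos hq
  have hconj : p.HolderConjugate q := ⟨by rw [inv_one]; rwa [← one_div, ← one_div], hp0, hq0⟩
  set A := E (fun ω => |X ω| ^ p) with hA
  set B := E (fun ω => |Y ω| ^ q) with hB
  -- E 0 = 0
  have hE0 : E (fun _ => 0) = 0 := by
    have := hpos 0 le_rfl X
    simpa using this
  have hA0 : 0 ≤ A := by
    rw [hA, ← hE0]; exact hmono _ _ fun ω => Real.rpow_nonneg (abs_nonneg _) p
  have hB0 : 0 ≤ B := by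
    rw [hB, ← hE0]; exact hmono _ _ fun ω => Real.rpow_nonneg (abs_nonneg _) q
  -- key bound for every t > 0
  have key : ∀ t : ℝ, 0 < t →
      E (fun ω => |X ω * Y ω|) ≤ t ^ p / p * A + t ^ (-q) / q * B := by
    intro t ht
    have step1 : E (fun ω => |X ω * Y ω|) ≤
        E (fun ω => t ^ p / p * |X ω| ^ p + t ^ (-q) / q * |Y ω| ^ q) := by
      apply hmono
      intro ω
      have hy := Real.young_inequality_of_nonneg
        (mul_nonneg ht.le (abs_nonneg (X ω)))
        (div_nonneg (abs_nonneg (Y ω)) ht.le) hconj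
      have hab : (t * |X ω|) * (|Y ω| / t) = |X ω * Y ω| := by
        field_simp [abs_mul]
        rw [abs_mul]
      rw [hab] at hy
      have h1 : (t * |X ω|) ^ p = t ^ p * |X ω| ^ p :=
        Real.mul_rpow ht.le (abs_nonneg _)
      have h2 : (|Y ω| / t) ^ q = t ^ (-q) * |Y ω| ^ q := by
        rw [Real.div_rpow (abs_nonneg _) ht.le, Real.rpow_neg ht.le,
          div_eq_mul_inv, mul_comm]
      rw [h1, h2] at hy
      calc |X ω * Y ω| ≤ t ^ p * |X ω| ^ p / p + t ^ (-q) * |Y ω| ^ q / q := hy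
        _ = t ^ p / p * |X ω| ^ p + t ^ (-q) / q * |Y ω| ^ q := by ring
    refine step1.trans ((hsub _ _).trans ?_)
    have c1 : 0 ≤ t ^ p / p := div_nonneg (Real.rpow_nonneg ht.le _) hp0.le
    have c2 : 0 ≤ t ^ (-q) / q := div_nonneg (Real.rpow_nonneg ht.le _) hq0.le
    rw [hpos _ c1, hpos _ c2]
  -- p + q = p * q
  have hpqsum : p + q = p * q := by
    field_simp at hpq
    linarith [hpq]
  have hpq0 : (0:ℝ) < p + q := by positivity
  have hq' : 1 - 1/q = 1/p := by linarith
  have hp' : 1 - 1/p = 1/q := by linarith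
  -- bound with ε-shifted A, B
  have keyε : ∀ ε : ℝ, 0 < ε →
      E (fun ω => |X ω * Y ω|) ≤ (A + ε) ^ (1/p) * (B + ε) ^ (1/q) := by
    intro ε hε
    have ha : (0:ℝ) < A + ε := by linarith
    have hb : (0:ℝ) < B + ε := by linarith
    set r : ℝ := (B + ε) / (A + ε) with hrdef
    have hr : 0 < r := div_pos hb ha
    set t : ℝ := r ^ (1 / (p + q)) with htdef
    have ht : 0 < t := Real.rpow_pos_of_pos hr _
    set M : ℝ := (A + ε) ^ (1/p) * (B + ε) ^ (1/q) with hMdef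
    have e1 : t ^ p = r ^ (1/q) := by
      rw [htdef, ← Real.rpow_mul hr.le]
      congr 1
      field_simp
      linarith
    have e2 : t ^ (-q) = r ^ (-(1/p)) := by
      rw [htdef, ← Real.rpow_mul hr.le]
      congr 1
      field_simp
      linarith
    have haq : (A + ε) ^ (1/p : ℝ) = (A + ε) / (A + ε) ^ (1/q : ℝ) := by
      rw [← hq', Real.rpow_sub ha, Real.rpow_one]
    have hbp : (B + ε) ^ (1/q : ℝ) = (B + ε) / (B + ε) ^ (1/p : ℝ) := by
      rw [← hp', Real.rpow_sub hb, Real.rpow_one]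
    have hapos : (0:ℝ) < (A + ε) ^ (1/q : ℝ) := Real.rpow_pos_of_pos ha _
    have hbpos : (0:ℝ) < (B + ε) ^ (1/p : ℝ) := Real.rpow_pos_of_pos hb _
    have htpA : t ^ p * (A + ε) = M := by
      rw [e1, hrdef, Real.div_rpow hb.le ha.le, hMdef, haq]
      field_simp
    have htqB : t ^ (-q) * (B + ε) = M := by
      have hap2 : (0:ℝ) < (A + ε) ^ (1/p : ℝ) := Real.rpow_pos_of_pos ha _
      rw [e2, Real.rpow_neg hr.le, hrdef, Real.div_rpow hb.le ha.le, hMdef, hbp]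
      field_simp
    calc E (fun ω => |X ω * Y ω|) ≤ t ^ p / p * A + t ^ (-q) / q * B := key t ht
      _ ≤ t ^ p / p * (A + ε) + t ^ (-q) / q * (B + ε) := by
          have c1 : 0 ≤ t ^ p / p := div_nonneg (Real.rpow_nonneg ht.le _) hp0.le
          have c2 : 0 ≤ t ^ (-q) / q := div_nonneg (Real.rpow_nonneg ht.le _) hq0.le
          gcongr <;> linarith
      _ = (1/p) * (t ^ p * (A + ε)) + (1/q) * (t ^ (-q) * (B + ε)) := by ring
      _ = (1/p) * M + (1/q) * M := by rw [htpA, htqB]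
      _ = M := by rw [← add_mul, hpq, one_mul]
  -- take the limit ε → 0⁺
  have hlim : Filter.Tendsto (fun ε : ℝ => (A + ε) ^ (1/p) * (B + ε) ^ (1/q))
      (nhdsWithin 0 (Set.Ioi 0)) (nhds (A ^ (1/p) * B ^ (1/q))) := by
    have h1 : Filter.Tendsto (fun ε : ℝ => A + ε) (nhdsWithin 0 (Set.Ioi 0)) (nhds A) := by
      have : Filter.Tendsto (fun ε : ℝ => A + ε) (nhds 0) (nhds (A + 0)) :=
        (continuous_const.add continuous_id).tendsto 0
      rw [add_zero] at this
      exact this.mono_left nhdsWithin_le_nhds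
    have h2 : Filter.Tendsto (fun ε : ℝ => B + ε) (nhdsWithin 0 (Set.Ioi 0)) (nhds B) := by
      have : Filter.Tendsto (fun ε : ℝ => B + ε) (nhds 0) (nhds (B + 0)) :=
        (continuous_const.add continuous_id).tendsto 0
      rw [add_zero] at this
      exact this.mono_left nhdsWithin_le_nhds
    have c1 : ContinuousAt (fun x : ℝ => x ^ (1/p : ℝ)) A :=
      Real.continuousAt_rpow_const A (1/p) (Or.inr (by positivity))
    have c2 : ContinuousAt (fun x : ℝ => x ^ (1/q : ℝ)) B :=
      Real.continuousAt_rpow_const B (1/q) (Or.inr (by positivity))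
    exact (c1.tendsto.comp h1).mul (c2.tendsto.comp h2)
  exact ge_of_tendsto hlim (Filter.eventually_of_mem self_mem_nhdsWithin
    fun ε hε => keyε ε hε)
end

section
/- Let c ≥ 0 and K ≥ 0 be real constants, and let φ : [0,∞) → ℝ satisfy: (i) φ(t) ≤ φ(s) + φ(t − s) + 2c·s·(t − s) for all 0 ≤ s ≤ t, and (ii) φ(δ) ≤ K·δ² for all δ ≥ 0. Then φ(t) ≤ c·t² for all t ≥ 0. -/
/-- If `φ : [0,∞) → ℝ` satisfies
`φ(t) ≤ φ(s) + φ(t-s) + 2c·s·(t-s)` for all `0 ≤ s ≤ t` and `φ(δ) ≤ K·δ²` for all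
`δ ≥ 0` (with constants `c, K ≥ 0`), then `φ(t) ≤ c·t²` for all `t ≥ 0`. -/
theorem subadditive_quadratic_bound
    (c K : ℝ) (hc : 0 ≤ c) (hK : 0 ≤ K) (φ : ℝ → ℝ)
    (h1 : ∀ s t : ℝ, 0 ≤ s → s ≤ t → φ t ≤ φ s + φ (t - s) + 2 * c * s * (t - s))
    (h2 : ∀ δ : ℝ, 0 ≤ δ → φ δ ≤ K * δ ^ 2) :
    ∀ t : ℝ, 0 ≤ t → φ t ≤ c * t ^ 2 := by
  -- Iteration lemma
  have hφ0 : φ 0 ≤ 0 := by simpa using h2 0 le_rfl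
  have key : ∀ (δ : ℝ), 0 ≤ δ → ∀ n : ℕ,
      φ (n * δ) ≤ n * φ δ + c * δ ^ 2 * n * (n - 1) := by
    intro δ hδ n
    induction n with
    | zero => simpa using hφ0
    | succ n ih =>
      have hs : (0:ℝ) ≤ n * δ := by positivity
      have hst : (n:ℝ) * δ ≤ (n + 1 : ℕ) * δ := by
        push_cast; nlinarith
      have h := h1 (n * δ) ((n + 1 : ℕ) * δ) hs hst
      have hdiff : ((n + 1 : ℕ) : ℝ) * δ - n * δ = δ := by push_cast; ring
      rw [hdiff] at h
      have : φ ((n + 1 : ℕ) * δ) ≤ (n * φ δ + c * δ ^ 2 * n * (n - 1)) + φ δ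
          + 2 * c * (n * δ) * δ := by linarith
      push_cast
      push_cast at this
      nlinarith
  intro t ht
  -- For each n ≥ 1, φ t ≤ K t²/n + c t²
  have bound : ∀ n : ℕ, 1 ≤ n → φ t ≤ K * t ^ 2 / n + c * t ^ 2 := by
    intro n hn
    have hn' : (0:ℝ) < n := by exact_mod_cast hn
    have hδ : 0 ≤ t / n := by positivity
    have h := key (t / n) hδ n
    rw [mul_div_cancel₀ t hn'.ne'] at h
    have h2' := h2 (t / n) hδ
    have hle : φ t ≤ n * (K * (t / n) ^ 2) + c * (t / n) ^ 2 * n * (n - 1) := by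
      nlinarith [mul_le_mul_of_nonneg_left h2' hn'.le]
    have e1 : (n:ℝ) * (K * (t / n) ^ 2) = K * t ^ 2 / n := by
      field_simp
    have e2 : c * (t / n) ^ 2 * n * (n - 1) ≤ c * t ^ 2 := by
      have : c * (t / n) ^ 2 * n * (n - 1) = c * t ^ 2 * ((n - 1) / n) := by
        field_simp
      rw [this]
      have h3 : ((n:ℝ) - 1) / n ≤ 1 := by
        rw [div_le_one hn']; linarith
      exact mul_le_of_le_one_right (by positivity) h3
    linarith [e1 ▸ hle]
  -- Let n → ∞
  by_contra hlt
  push_neg at hlt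
  set ε := φ t - c * t ^ 2 with hε
  have hεpos : 0 < ε := by simp [hε]; linarith
  obtain ⟨n, hn⟩ := exists_nat_gt (K * t ^ 2 / ε)
  have hn1 : 1 ≤ n := by
    by_contra h
    push_neg at h
    interval_cases n
    simp at hn
    have : 0 ≤ K * t ^ 2 / ε := by positivity
    linarith
  have hb := bound n hn1
  have hn' : (0:ℝ) < n := by exact_mod_cast hn1
  have : K * t ^ 2 / n < ε := by
    rw [div_lt_iff₀ hn']
    have := (div_lt_iff₀ hεpos).mp hn
    nlinarith
  linarith
end
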